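/- Let A be a symmetric n×n matrix (not necessarily positive definite), H₀ an SPD n×n matrix, x₀ ∈ ℝⁿ, and m ≥ 1. Run PCG on the quadratic q from x₀ with preconditioner H₀, and run LBFGS(m) with exact line search from the same x₀ using H_k⁰ = H₀ at every iteration. Assume iterations k = 0,…,j of both methods are well defined and s_kᵀy_k ≠ 0 for k = 0,…,j. Then, as long as g_k ≠ 0, the search directions, step lengths, and steps s_k generated by LBFGS(m) are identical to those generated by PCG: d_k^m = d_k^{PCG} for all k ≤ j. Consequently, if j = n, quadratic termination occurs. -/

import Mathlib

/-!
With exact line searches, PCG makes every gradient orthogonal to all earlier directions and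
`H₀`-orthogonal to all earlier gradients. Along PCG iterates, `s i = α i • d i` and
`y i = g (i + 1) - g i`, so every LBFGS factor `U i` fixes `g k` and every `(U i)ᵀ` with `i < k - 1`
fixes `H₀ g k`: in `H_k g_k` only the newest update survives, giving
`H₀ g_k - (g_kᵀH₀g_k / g_{k-1}ᵀH₀g_{k-1}) d_{k-1} = -d_k`, whatever the memory `m ≥ 1`.
Induction on `k` identifies the two runs. Quadratic termination follows because `ℝⁿ` cannot hold
`n + 1` nonzero `H₀`-orthogonal gradients.
-/

open Matrix

/-- Ordered product `U a * U (a+1) * ⋯ * U (b-1)` of a sequence of square matrices. -/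
noncomputable def prodAsc {n : ℕ} (U : ℕ → Matrix (Fin n) (Fin n) ℝ) (a b : ℕ) :
    Matrix (Fin n) (Fin n) ℝ :=
  ((List.range (b - a)).map fun i => U (a + i)).prod

/-- The LBFGS(m) inverse-Hessian approximation at iteration `k`, built from the `m` most
recent pairs `(s i, y i)` (i.e., indices `k - m, …, k - 1`) with seed matrix `H0`. -/
noncomputable def lbfgsH {n : ℕ} (H0 : Matrix (Fin n) (Fin n) ℝ)
    (s y : ℕ → Fin n → ℝ) (m k : ℕ) : Matrix (Fin n) (Fin n) ℝ :=
  let ρ : ℕ → ℝ := fun i => 1 / (s i ⬝ᵥ y i)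
  let U : ℕ → Matrix (Fin n) (Fin n) ℝ := fun i => 1 - ρ i • vecMulVec (y i) (s i)
  (prodAsc U (k - m) k)ᵀ * H0 * prodAsc U (k - m) k +
    ∑ i ∈ Finset.Ico (k - m) k,
      ρ i • ((prodAsc U (i + 1) k)ᵀ * vecMulVec (s i) (s i) * prodAsc U (i + 1) k)

namespace Matrix

variable {ι R : Type*} [Fintype ι]

theorem IsSymm.dotProduct_mulVec_comm [CommSemiring R] {M : Matrix ι ι R} (hM : M.IsSymm)
    (v w : ι → R) :
    v ⬝ᵥ (M *ᵥ w) = w ⬝ᵥ (M *ᵥ v) := by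
  rw [dotProduct_mulVec, ← mulVec_transpose, hM.eq, dotProduct_comm]

variable [CommRing R] [DecidableEq ι]

theorem one_sub_smul_vecMulVec_mulVec (ρ : R) (y s v : ι → R) :
    (1 - ρ • vecMulVec y s) *ᵥ v = v - (ρ * (s ⬝ᵥ v)) • y := by
  rw [sub_mulVec, one_mulVec, smul_mulVec, vecMulVec_mulVec, op_smul_eq_smul, smul_smul]

theorem transpose_one_sub_smul_vecMulVec_mulVec (ρ : R) (y s v : ι → R) :
    (1 - ρ • vecMulVec y s)ᵀ *ᵥ v = v - (ρ * (y ⬝ᵥ v)) • s := by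
  rw [transpose_sub, transpose_one, transpose_smul, transpose_vecMulVec,
    one_sub_smul_vecMulVec_mulVec]

end Matrix

section ProdAsc

variable {n : ℕ} (U : ℕ → Matrix (Fin n) (Fin n) ℝ) {a b : ℕ}

theorem prodAsc_of_le (h : b ≤ a) : prodAsc U a b = 1 := by
  simp [prodAsc, Nat.sub_eq_zero_of_le h]

theorem prodAsc_succ (h : a ≤ b) : prodAsc U a (b + 1) = prodAsc U a b * U b := by
  obtain ⟨d, rfl⟩ := Nat.exists_eq_add_of_le h
  rw [prodAsc, prodAsc, show a + d + 1 - a = d + 1 by omega, Nat.add_sub_cancel_left,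
    List.range_succ, List.map_append, List.prod_append]
  simp

variable {U} {v : Fin n → ℝ}

theorem prodAsc_mulVec_eq_self (hU : ∀ i, a ≤ i → i < b → U i *ᵥ v = v) :
    prodAsc U a b *ᵥ v = v := by
  induction b with
  | zero => rw [prodAsc_of_le U a.zero_le, one_mulVec]
  | succ b ih =>
    by_cases hab : a ≤ b
    · rw [prodAsc_succ U hab, ← mulVec_mulVec, hU b hab b.lt_succ_self,
        ih fun i hai hib => hU i hai (by omega)]
    · rw [prodAsc_of_le U (by omega), one_mulVec]

theorem prodAsc_transpose_mulVec_eq_self (hU : ∀ i, a ≤ i → i < b → (U i)ᵀ *ᵥ v = v) :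
    (prodAsc U a b)ᵀ *ᵥ v = v := by
  induction b with
  | zero => rw [prodAsc_of_le U a.zero_le, transpose_one, one_mulVec]
  | succ b ih =>
    by_cases hab : a ≤ b
    · rw [prodAsc_succ U hab, transpose_mul, ← mulVec_mulVec,
        ih fun i hai hib => hU i hai (by omega), hU b hab b.lt_succ_self]
    · rw [prodAsc_of_le U (by omega), transpose_one, one_mulVec]

end ProdAsc

section LBFGSMatrix

variable {n : ℕ} (H0 : Matrix (Fin n) (Fin n) ℝ) (s y : ℕ → Fin n → ℝ) {m p : ℕ}

noncomputable def lbfgsU (i : ℕ) : Matrix (Fin n) (Fin n) ℝ :=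
  1 - (1 / (s i ⬝ᵥ y i)) • vecMulVec (y i) (s i)

theorem lbfgsH_eq (k : ℕ) :
    lbfgsH H0 s y m k =
      (prodAsc (lbfgsU s y) (k - m) k)ᵀ * H0 * prodAsc (lbfgsU s y) (k - m) k +
      ∑ i ∈ Finset.Ico (k - m) k, (1 / (s i ⬝ᵥ y i)) •
        ((prodAsc (lbfgsU s y) (i + 1) k)ᵀ * vecMulVec (s i) (s i) *
          prodAsc (lbfgsU s y) (i + 1) k) :=
  rfl

theorem lbfgsH_zero : lbfgsH H0 s y m 0 = H0 := by
  simp [lbfgsH_eq, prodAsc]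

variable {H0 s y}

/-- All updates but the newest act trivially, and every rank-one term `s i s iᵀ` kills `v`. -/
theorem lbfgsH_succ_mulVec (hm : 1 ≤ m) {v : Fin n → ℝ} (hs : ∀ i ≤ p, s i ⬝ᵥ v = 0)
    (hy : ∀ i < p, y i ⬝ᵥ (H0 *ᵥ v) = 0) :
    lbfgsH H0 s y m (p + 1) *ᵥ v = H0 *ᵥ v - ((y p ⬝ᵥ (H0 *ᵥ v)) / (s p ⬝ᵥ y p)) • s p := by
  have hUv : ∀ a, prodAsc (lbfgsU s y) a (p + 1) *ᵥ v = v := fun a =>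
    prodAsc_mulVec_eq_self fun i _ hi => by
      rw [lbfgsU, one_sub_smul_vecMulVec_mulVec, hs i (by omega), mul_zero, zero_smul, sub_zero]
  have hUHv : (prodAsc (lbfgsU s y) (p + 1 - m) p)ᵀ *ᵥ (H0 *ᵥ v) = H0 *ᵥ v :=
    prodAsc_transpose_mulVec_eq_self fun i _ hi => by
      rw [lbfgsU, transpose_one_sub_smul_vecMulVec_mulVec, hy i hi, mul_zero, zero_smul,
        sub_zero]
  have hsum : ∀ i ∈ Finset.Ico (p + 1 - m) (p + 1), ((1 / (s i ⬝ᵥ y i)) •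
      ((prodAsc (lbfgsU s y) (i + 1) (p + 1))ᵀ * vecMulVec (s i) (s i) *
        prodAsc (lbfgsU s y) (i + 1) (p + 1))) *ᵥ v = 0 := by
    intro i hi
    rw [smul_mulVec, ← mulVec_mulVec, ← mulVec_mulVec, hUv, vecMulVec_mulVec,
      hs i (by simp at hi; omega)]
    simp
  rw [lbfgsH_eq, add_mulVec, sum_mulVec, Finset.sum_eq_zero hsum, add_zero, ← mulVec_mulVec,
    ← mulVec_mulVec, hUv, prodAsc_succ _ (by omega), transpose_mul, ← mulVec_mulVec, hUHv,
    lbfgsU, transpose_one_sub_smul_vecMulVec_mulVec, one_div_mul_eq_div]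

end LBFGSMatrix

section ConjugateDirections

variable {ι : Type*} [Fintype ι] {A H : Matrix ι ι ℝ} {b : ι → ℝ} {x d g : ℕ → ι → ℝ}

noncomputable def exactStepLength (A : Matrix ι ι ℝ) (g d : ι → ℝ) : ℝ :=
  -(g ⬝ᵥ d) / (d ⬝ᵥ (A *ᵥ d))

structure IsExactLineSearch (A : Matrix ι ι ℝ) (b : ι → ℝ) (x d g : ℕ → ι → ℝ) : Prop where
  grad : ∀ k, g k = A *ᵥ x k - b
  step : ∀ k, x (k + 1) = x k + exactStepLength A (g k) (d k) • d k

structure IsPCG (A H : Matrix ι ι ℝ) (b : ι → ℝ) (x d g : ℕ → ι → ℝ) : Prop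
    extends IsExactLineSearch A b x d g where
  dir_zero : d 0 = -(H *ᵥ g 0)
  dir_succ : ∀ k, d (k + 1) = -(H *ᵥ g (k + 1)) +
    ((g (k + 1) ⬝ᵥ (H *ᵥ g (k + 1))) / (g k ⬝ᵥ (H *ᵥ g k))) • d k

namespace IsExactLineSearch

theorem mulVec_step (h : IsExactLineSearch A b x d g) (k : ℕ) :
    A *ᵥ (x (k + 1) - x k) = g (k + 1) - g k := by
  rw [h.grad, h.grad, mulVec_sub]
  abel

theorem grad_succ (h : IsExactLineSearch A b x d g) (k : ℕ) :
    g (k + 1) = g k + exactStepLength A (g k) (d k) • (A *ᵥ d k) := by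
  have hstep := h.mulVec_step k
  rw [h.step, add_sub_cancel_left, mulVec_smul] at hstep
  rw [hstep, add_sub_cancel]

theorem mulVec_dir (h : IsExactLineSearch A b x d g) {k : ℕ}
    (hα : exactStepLength A (g k) (d k) ≠ 0) :
    A *ᵥ d k = (exactStepLength A (g k) (d k))⁻¹ • (g (k + 1) - g k) := by
  rw [h.grad_succ, add_sub_cancel_left, inv_smul_smul₀ hα]

theorem grad_succ_dotProduct_dir_self (h : IsExactLineSearch A b x d g) {k : ℕ}
    (hk : d k ⬝ᵥ (A *ᵥ d k) ≠ 0) : g (k + 1) ⬝ᵥ d k = 0 := by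
  rw [h.grad_succ, add_dotProduct, smul_dotProduct, dotProduct_comm (A *ᵥ d k), smul_eq_mul,
    exactStepLength, div_mul_cancel₀ _ hk, add_neg_cancel]

theorem grad_succ_dotProduct_dir (h : IsExactLineSearch A b x d g) (hA : A.IsSymm) {k : ℕ}
    (hk : d k ⬝ᵥ (A *ᵥ d k) ≠ 0) (horth : ∀ i < k, g k ⬝ᵥ d i = 0)
    (hconj : ∀ i < k, d k ⬝ᵥ (A *ᵥ d i) = 0) : ∀ i ≤ k, g (k + 1) ⬝ᵥ d i = 0 := by
  intro i hi
  rcases hi.lt_or_eq with hi | rfl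
  · rw [h.grad_succ, add_dotProduct, smul_dotProduct, dotProduct_comm (A *ᵥ d k),
      hA.dotProduct_mulVec_comm, horth i hi, hconj i hi, smul_zero, add_zero]
  · exact h.grad_succ_dotProduct_dir_self hk

end IsExactLineSearch

namespace IsPCG

theorem grad_dotProduct_dir (h : IsPCG A H b x d g) {k : ℕ}
    (hdAd : ∀ i < k, d i ⬝ᵥ (A *ᵥ d i) ≠ 0) : g k ⬝ᵥ d k = -(g k ⬝ᵥ (H *ᵥ g k)) := by
  cases k with
  | zero => rw [h.dir_zero, dotProduct_neg]
  | succ k =>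
    rw [h.dir_succ, dotProduct_add, dotProduct_neg, dotProduct_smul,
      h.grad_succ_dotProduct_dir_self (hdAd k k.lt_succ_self), smul_zero, add_zero]

theorem exactStepLength_eq (h : IsPCG A H b x d g) {k : ℕ}
    (hdAd : ∀ i < k, d i ⬝ᵥ (A *ᵥ d i) ≠ 0) :
    exactStepLength A (g k) (d k) = (g k ⬝ᵥ (H *ᵥ g k)) / (d k ⬝ᵥ (A *ᵥ d k)) := by
  rw [exactStepLength, h.grad_dotProduct_dir hdAd, neg_neg]

/-- `H g i` lies in the span of `d (i - 1)` and `d i`. -/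
theorem dotProduct_mulVec_grad_eq_zero (h : IsPCG A H b x d g) {i : ℕ} {v : ι → ℝ}
    (hv : ∀ i' ≤ i, v ⬝ᵥ d i' = 0) : v ⬝ᵥ (H *ᵥ g i) = 0 := by
  cases i with
  | zero => rw [← neg_neg (H *ᵥ g 0), ← h.dir_zero, dotProduct_neg, hv 0 le_rfl, neg_zero]
  | succ i =>
    have hHg : H *ᵥ g (i + 1) =
        ((g (i + 1) ⬝ᵥ (H *ᵥ g (i + 1))) / (g i ⬝ᵥ (H *ᵥ g i))) • d i - d (i + 1) := by
      rw [h.dir_succ]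
      abel
    rw [hHg, dotProduct_sub, dotProduct_smul, hv i (by omega), hv (i + 1) le_rfl, smul_zero,
      sub_zero]

theorem dir_succ_conj (h : IsPCG A H b x d g) (hH : H.IsSymm) {k : ℕ}
    (hgHg : ∀ i ≤ k, g i ⬝ᵥ (H *ᵥ g i) ≠ 0) (hdAd : ∀ i ≤ k, d i ⬝ᵥ (A *ᵥ d i) ≠ 0)
    (horth : ∀ i ≤ k, g (k + 1) ⬝ᵥ d i = 0) (hconj : ∀ i < k, d k ⬝ᵥ (A *ᵥ d i) = 0) :
    ∀ i ≤ k, d (k + 1) ⬝ᵥ (A *ᵥ d i) = 0 := by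
  intro i hi
  have hα := h.exactStepLength_eq (k := i) fun i' hi' => hdAd i' (by omega)
  have hAd := h.mulVec_dir (by rw [hα]; exact div_ne_zero (hgHg i hi) (hdAd i hi))
  have hHg : ∀ i' ≤ k, (H *ᵥ g (k + 1)) ⬝ᵥ g i' = 0 := fun i' hi' => by
    rw [dotProduct_comm, hH.dotProduct_mulVec_comm]
    exact h.dotProduct_mulVec_grad_eq_zero fun i'' hi'' => horth i'' (by omega)
  rw [h.dir_succ, add_dotProduct, neg_dotProduct, smul_dotProduct]
  rcases hi.lt_or_eq with hi | rfl
  · rw [hconj i hi, hAd, dotProduct_smul, dotProduct_sub, hHg (i + 1) hi, hHg i hi.le, sub_zero,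
      smul_zero, smul_zero, neg_zero, add_zero]
  · have hHgAd : (H *ᵥ g (i + 1)) ⬝ᵥ (A *ᵥ d i) =
        (exactStepLength A (g i) (d i))⁻¹ * (g (i + 1) ⬝ᵥ (H *ᵥ g (i + 1))) := by
      rw [hAd, dotProduct_smul, dotProduct_sub, hHg i le_rfl, sub_zero, smul_eq_mul,
        dotProduct_comm (H *ᵥ _)]
    rw [hHgAd, hα, inv_div, smul_eq_mul]
    ring

theorem grad_dotProduct_dir_and_dir_conj (h : IsPCG A H b x d g) (hA : A.IsSymm)
    (hH : H.IsSymm) {k : ℕ} (hgHg : ∀ i < k, g i ⬝ᵥ (H *ᵥ g i) ≠ 0)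
    (hdAd : ∀ i < k, d i ⬝ᵥ (A *ᵥ d i) ≠ 0) :
    ∀ i < k, g k ⬝ᵥ d i = 0 ∧ d k ⬝ᵥ (A *ᵥ d i) = 0 := by
  induction k with
  | zero => exact fun i hi => absurd hi i.not_lt_zero
  | succ k ih =>
    have ih := ih (fun i hi => hgHg i (by omega)) (fun i hi => hdAd i (by omega))
    have horth := h.grad_succ_dotProduct_dir hA (hdAd k k.lt_succ_self)
      (fun i hi => (ih i hi).1) (fun i hi => (ih i hi).2)
    have hconj := h.dir_succ_conj hH (fun i hi => hgHg i (by omega))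
      (fun i hi => hdAd i (by omega)) horth (fun i hi => (ih i hi).2)
    exact fun i hi => ⟨horth i (by omega), hconj i (by omega)⟩

theorem grad_dotProduct_mulVec_grad_eq_zero (h : IsPCG A H b x d g) (hA : A.IsSymm)
    (hH : H.IsSymm) {i k : ℕ} (hgHg : ∀ i < k, g i ⬝ᵥ (H *ᵥ g i) ≠ 0)
    (hdAd : ∀ i < k, d i ⬝ᵥ (A *ᵥ d i) ≠ 0) (hik : i < k) : g k ⬝ᵥ (H *ᵥ g i) = 0 :=
  h.dotProduct_mulVec_grad_eq_zero fun i' hi' =>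
    (h.grad_dotProduct_dir_and_dir_conj hA hH hgHg hdAd i' (by omega)).1

theorem exists_grad_eq_zero (h : IsPCG A H b x d g) (hA : A.IsSymm) (hH : H.PosDef)
    (hdAd : ∀ k < Fintype.card ι, d k ⬝ᵥ (A *ᵥ d k) ≠ 0) :
    ∃ k ≤ Fintype.card ι, g k = 0 := by
  classical
  by_contra! hg
  have hHs : H.IsSymm := isHermitian_iff_isSymm.mp hH.isHermitian
  have hgHg : ∀ k ≤ Fintype.card ι, g k ⬝ᵥ (H *ᵥ g k) ≠ 0 := fun k hk => by
    have hpos := hH.dotProduct_mulVec_pos (hg k hk)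
    rw [star_trivial] at hpos
    exact hpos.ne'
  have hortho : ∀ i k, i < k → k ≤ Fintype.card ι → g k ⬝ᵥ (H *ᵥ g i) = 0 :=
    fun i k hik hk => h.grad_dotProduct_mulVec_grad_eq_zero hA hHs
      (fun i' hi' => hgHg i' (by omega)) (fun i' hi' => hdAd i' (by omega)) hik
  have hli : LinearIndependent ℝ fun k : Fin (Fintype.card ι + 1) => g k := by
    refine LinearMap.linearIndependent_of_isOrthoᵢ (B := toLinearMap₂' ℝ H) ?_ ?_
    · intro i k hik
      simp only [Function.onFun, toLinearMap₂'_apply']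
      rcases lt_or_gt_of_ne (Fin.val_injective.ne hik) with hlt | hlt
      · rw [hHs.dotProduct_mulVec_comm]
        exact hortho i k hlt (by omega)
      · exact hortho k i hlt (by omega)
    · intro k
      rw [toLinearMap₂'_apply']
      exact hgHg k (by omega)
  simpa using hli.fintype_card_le_finrank

end IsPCG

end ConjugateDirections

section LBFGS

variable {n : ℕ} {A H : Matrix (Fin n) (Fin n) ℝ} {b : Fin n → ℝ} {m : ℕ}

structure IsLBFGS (A H : Matrix (Fin n) (Fin n) ℝ) (b : Fin n → ℝ) (m : ℕ)
    (x d s y g : ℕ → Fin n → ℝ) : Prop extends IsExactLineSearch A b x d g where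
  dir : ∀ k, d k = -(lbfgsH H s y m k *ᵥ g k)
  step_eq : ∀ k, s k = x (k + 1) - x k
  grad_diff_eq : ∀ k, y k = A *ᵥ s k

theorem IsPCG.lbfgsH_mulVec_grad_succ {x d g s y : ℕ → Fin n → ℝ} {p : ℕ}
    (h : IsPCG A H b x d g) (hm : 1 ≤ m) (hA : A.IsSymm) (hH : H.IsSymm)
    (hgHg : ∀ i ≤ p, g i ⬝ᵥ (H *ᵥ g i) ≠ 0) (hdAd : ∀ i ≤ p, d i ⬝ᵥ (A *ᵥ d i) ≠ 0)
    (hs : ∀ q ≤ p, s q = x (q + 1) - x q) (hy : ∀ q ≤ p, y q = A *ᵥ s q) :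
    lbfgsH H s y m (p + 1) *ᵥ g (p + 1) = -d (p + 1) := by
  have hgHg' : ∀ i < p + 1, g i ⬝ᵥ (H *ᵥ g i) ≠ 0 := fun i hi => hgHg i (by omega)
  have hdAd' : ∀ i < p + 1, d i ⬝ᵥ (A *ᵥ d i) ≠ 0 := fun i hi => hdAd i (by omega)
  have hs' : ∀ q ≤ p, s q = exactStepLength A (g q) (d q) • d q := fun q hq => by
    rw [hs q hq, h.step, add_sub_cancel_left]
  have hy' : ∀ q ≤ p, y q = g (q + 1) - g q := fun q hq => by
    rw [hy q hq, hs q hq, h.mulVec_step]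
  have hsg : ∀ i ≤ p, s i ⬝ᵥ g (p + 1) = 0 := fun i hi => by
    rw [hs' i hi, smul_dotProduct, dotProduct_comm,
      (h.grad_dotProduct_dir_and_dir_conj hA hH hgHg' hdAd' i (by omega)).1, smul_zero]
  have hgHg_succ : ∀ i ≤ p, g i ⬝ᵥ (H *ᵥ g (p + 1)) = 0 := fun i hi => by
    rw [hH.dotProduct_mulVec_comm]
    exact h.grad_dotProduct_mulVec_grad_eq_zero hA hH hgHg' hdAd' (by omega)
  have hyHg : ∀ i < p, y i ⬝ᵥ (H *ᵥ g (p + 1)) = 0 := fun i hi => by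
    rw [hy' i hi.le, sub_dotProduct, hgHg_succ (i + 1) hi, hgHg_succ i hi.le, sub_zero]
  have hsy : s p ⬝ᵥ y p = exactStepLength A (g p) (d p) * (g p ⬝ᵥ (H *ᵥ g p)) := by
    rw [hs' p le_rfl, hy' p le_rfl, smul_dotProduct, dotProduct_sub, dotProduct_comm (d p),
      dotProduct_comm (d p), h.grad_succ_dotProduct_dir_self (hdAd p le_rfl),
      h.grad_dotProduct_dir fun i hi => hdAd i hi.le, zero_sub, neg_neg, smul_eq_mul]
  have hα : exactStepLength A (g p) (d p) ≠ 0 := by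
    rw [h.exactStepLength_eq fun i hi => hdAd i hi.le]
    exact div_ne_zero (hgHg p le_rfl) (hdAd p le_rfl)
  rw [lbfgsH_succ_mulVec hm hsg hyHg, hsy, hy' p le_rfl, sub_dotProduct, hgHg_succ p le_rfl,
    sub_zero, hs' p le_rfl, smul_smul, h.dir_succ, div_mul_eq_mul_div,
    mul_comm _ (exactStepLength _ _ _), mul_div_mul_left _ _ hα, neg_add, neg_neg, sub_eq_add_neg]

theorem IsLBFGS.eq_pcg {xB dB s y gB xC dC gC : ℕ → Fin n → ℝ} {j : ℕ}
    (hL : IsLBFGS A H b m xB dB s y gB) (hP : IsPCG A H b xC dC gC) (hm : 1 ≤ m)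
    (hA : A.IsSymm) (hH : H.IsSymm) (h0 : xB 0 = xC 0)
    (hgHg : ∀ i ≤ j, gC i ⬝ᵥ (H *ᵥ gC i) ≠ 0) (hdAd : ∀ i ≤ j, dC i ⬝ᵥ (A *ᵥ dC i) ≠ 0) :
    ∀ k ≤ j, xB k = xC k ∧ dB k = dC k := by
  intro k
  induction k using Nat.strong_induction_on with
  | _ k ih =>
    intro hk
    have hx : xB k = xC k := by
      cases k with
      | zero => exact h0
      | succ p =>
        obtain ⟨hxp, hdp⟩ := ih p p.lt_succ_self (by omega)
        rw [hL.step, hP.step, hL.grad, hP.grad, hxp, hdp]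
    refine ⟨hx, ?_⟩
    rw [hL.dir, hL.grad, hx, ← hP.grad]
    cases k with
    | zero => rw [lbfgsH_zero, hP.dir_zero]
    | succ p =>
      have hxle : ∀ q ≤ p + 1, xB q = xC q := fun q hq =>
        hq.lt_or_eq.elim (fun hq => (ih q hq (by omega)).1) (· ▸ hx)
      have hs : ∀ q ≤ p, s q = xC (q + 1) - xC q := fun q hq => by
        rw [hL.step_eq, hxle q (by omega), hxle (q + 1) (by omega)]
      rw [hP.lbfgsH_mulVec_grad_succ hm hA hH (fun i hi => hgHg i (by omega))
        (fun i hi => hdAd i (by omega)) hs (fun q _ => hL.grad_diff_eq q), neg_neg]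

end LBFGS

theorem lbfgs_eq_pcg_general
    (n : ℕ) (A H0 : Matrix (Fin n) (Fin n) ℝ) (b x0 : Fin n → ℝ)
    (hA : A.IsSymm) (hH0 : H0.PosDef)
    (m : ℕ) (hm : 1 ≤ m) (j : ℕ)
    -- PCG sequences with preconditioner H0
    (xC dC gC : ℕ → Fin n → ℝ)
    (hgC : ∀ k, gC k = A *ᵥ xC k - b)
    (hxC0 : xC 0 = x0)
    (hdC0 : dC 0 = -(H0 *ᵥ gC 0))
    (hdC : ∀ k, dC (k+1) = -(H0 *ᵥ gC (k+1)) +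
      ((gC (k+1) ⬝ᵥ (H0 *ᵥ gC (k+1))) / (gC k ⬝ᵥ (H0 *ᵥ gC k))) • dC k)
    (hxC : ∀ k, xC (k+1) = xC k +
      (-(gC k ⬝ᵥ dC k) / (dC k ⬝ᵥ (A *ᵥ dC k))) • dC k)
    -- LBFGS(m) sequences with exact line search
    (xB dB sB yB gB : ℕ → Fin n → ℝ)
    (hgB : ∀ k, gB k = A *ᵥ xB k - b)
    (hxB0 : xB 0 = x0)
    (hdB : ∀ k, dB k = -(lbfgsH H0 sB yB m k *ᵥ gB k))
    (hxB : ∀ k, xB (k+1) = xB k +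
      (-(gB k ⬝ᵥ dB k) / (dB k ⬝ᵥ (A *ᵥ dB k))) • dB k)
    (hsB : ∀ k, sB k = xB (k+1) - xB k)
    (hyB : ∀ k, yB k = A *ᵥ sB k)
    -- iterations 0,…,j of both methods are well defined
    (hwf1 : ∀ k, k ≤ j → gC k ⬝ᵥ (H0 *ᵥ gC k) ≠ 0)
    (hwf2 : ∀ k, k ≤ j → dC k ⬝ᵥ (A *ᵥ dC k) ≠ 0) :
    -- directions, step lengths and steps coincide with those of PCG
    (∀ k, k ≤ j → (∀ i, i ≤ k → gB i ≠ 0) →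
      dB k = dC k ∧
      xB k = xC k ∧
      -(gB k ⬝ᵥ dB k) / (dB k ⬝ᵥ (A *ᵥ dB k)) =
        -(gC k ⬝ᵥ dC k) / (dC k ⬝ᵥ (A *ᵥ dC k)) ∧
      sB k = xC (k+1) - xC k) ∧
    -- quadratic termination
    (j = n → ∃ k, k ≤ n ∧ A *ᵥ xB k = b) := by
  have hP : IsPCG A H0 b xC dC gC := ⟨⟨hgC, hxC⟩, hdC0, hdC⟩
  have hL : IsLBFGS A H0 b m xB dB sB yB gB := ⟨⟨hgB, hxB⟩, hdB, hsB, hyB⟩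
  have hsame := hL.eq_pcg hP hm hA (isHermitian_iff_isSymm.mp hH0.isHermitian)
    (hxB0.trans hxC0.symm) hwf1 hwf2
  have hgrad : ∀ k ≤ j, gB k = gC k := fun k hk => by rw [hgB, hgC, (hsame k hk).1]
  refine ⟨fun k hk _ => ?_, fun hjn => ?_⟩
  · obtain ⟨hx, hd⟩ := hsame k hk
    refine ⟨hd, hx, by rw [hgrad k hk, hd], ?_⟩
    rw [hsB, hxB, hxC, hx, hd, hgrad k hk]
  · subst hjn
    obtain ⟨k, hk, hgk⟩ := hP.exists_grad_eq_zero hA hH0 (by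
      simpa only [Fintype.card_fin] using fun k hk => hwf2 k hk.le)
    rw [Fintype.card_fin] at hk
    refine ⟨k, hk, ?_⟩
    rw [(hsame k hk).1, ← sub_eq_zero, ← hgC, hgk]

/-- LBFGS(m) with exact line search and seed `H_k⁰ = H₀` generates,
for any memory `m ≥ 1`, the same search directions, step lengths and steps as PCG with
preconditioner `H₀`, and enjoys quadratic termination when `j = n`. -/
theorem lbfgs_eq_pcg
    (n : ℕ) (A H0 : Matrix (Fin n) (Fin n) ℝ) (b x0 : Fin n → ℝ)
    (hA : A.IsSymm) (hH0 : H0.PosDef)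
    (m : ℕ) (hm : 1 ≤ m) (j : ℕ)
    -- PCG sequences with preconditioner H0
    (xC dC gC : ℕ → Fin n → ℝ)
    (hgC : ∀ k, gC k = A *ᵥ xC k - b)
    (hxC0 : xC 0 = x0)
    (hdC0 : dC 0 = -(H0 *ᵥ gC 0))
    (hdC : ∀ k, dC (k+1) = -(H0 *ᵥ gC (k+1)) +
      ((gC (k+1) ⬝ᵥ (H0 *ᵥ gC (k+1))) / (gC k ⬝ᵥ (H0 *ᵥ gC k))) • dC k)
    (hxC : ∀ k, xC (k+1) = xC k +
      (-(gC k ⬝ᵥ dC k) / (dC k ⬝ᵥ (A *ᵥ dC k))) • dC k)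
    -- LBFGS(m) sequences with exact line search
    (xB dB sB yB gB : ℕ → Fin n → ℝ)
    (hgB : ∀ k, gB k = A *ᵥ xB k - b)
    (hxB0 : xB 0 = x0)
    (hdB : ∀ k, dB k = -(lbfgsH H0 sB yB m k *ᵥ gB k))
    (hxB : ∀ k, xB (k+1) = xB k +
      (-(gB k ⬝ᵥ dB k) / (dB k ⬝ᵥ (A *ᵥ dB k))) • dB k)
    (hsB : ∀ k, sB k = xB (k+1) - xB k)
    (hyB : ∀ k, yB k = A *ᵥ sB k)
    -- iterations 0,…,j of both methods are well defined
    (hwf1 : ∀ k, k ≤ j → gC k ⬝ᵥ (H0 *ᵥ gC k) ≠ 0)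
    (hwf2 : ∀ k, k ≤ j → dC k ⬝ᵥ (A *ᵥ dC k) ≠ 0)
    (hwf3 : ∀ k, k ≤ j → dB k ⬝ᵥ (A *ᵥ dB k) ≠ 0)
    -- nonzero curvature along the steps
    (hsy : ∀ k, k ≤ j → sB k ⬝ᵥ yB k ≠ 0) :
    -- directions, step lengths and steps coincide with those of PCG
    (∀ k, k ≤ j → (∀ i, i ≤ k → gB i ≠ 0) →
      dB k = dC k ∧
      xB k = xC k ∧
      -(gB k ⬝ᵥ dB k) / (dB k ⬝ᵥ (A *ᵥ dB k)) =
        -(gC k ⬝ᵥ dC k) / (dC k ⬝ᵥ (A *ᵥ dC k)) ∧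
      sB k = xC (k+1) - xC k) ∧
    -- quadratic termination
    (j = n → ∃ k, k ≤ n ∧ A *ᵥ xB k = b) :=
  lbfgs_eq_pcg_general n A H0 b x0 hA hH0 m hm j xC dC gC hgC hxC0 hdC0 hdC hxC xB dB sB yB gB hgB
    hxB0 hdB hxB hsB hyB hwf1 hwf2
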